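/- arXiv:2403.03367 — 5 statements merged into one kernel-verified Lean document; each statement's English description precedes it below -/
import Mathlib

section
/- For every fee f with 0 < f ≤ f_max, there exists a unique L* > 0 such that f·H0(f, L*) = AP0(f) + r; that is, the fixed-fee AMM has a unique competitive-equilibrium liquidity level L_ff(f) at which LPs earn zero profit in excess of the risk-free rate. -/
open Set Filter

/-- **Fixed-fee AMM equilibrium (Lemma 1).** For every fee `f` with `0 < f ≤ fmax`, there is a
unique liquidity level `L > 0` at which LPs of the fixed-fee AMM earn zero profit in excess of
the risk-free rate, i.e. `f * H0 f L = AP0 f + r`. -/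
theorem ffAMM_unique_equilibrium
    (fmax r : ℝ) (hfmax : 0 < fmax) (hr : 0 < r)
    (H0 : ℝ → ℝ → ℝ)
    (hH0cont : ContinuousOn (fun p : ℝ × ℝ => H0 p.1 p.2) (Icc 0 fmax ×ˢ Ioi 0))
    (hH0f : ∀ L : ℝ, 0 < L → AntitoneOn (fun f => H0 f L) (Icc 0 fmax))
    (hH0L : ∀ f ∈ Icc (0:ℝ) fmax, StrictAntiOn (fun L => H0 f L) (Ioi 0))
    (hH0top : ∀ f ∈ Icc (0:ℝ) fmax, Tendsto (fun L => H0 f L) atTop (nhds 0))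
    (hH0zero : ∀ f ∈ Icc (0:ℝ) fmax,
      Tendsto (fun L => H0 f L) (nhdsWithin 0 (Ioi 0)) atTop)
    (AP0 : ℝ → ℝ)
    (hAP0cont : ContinuousOn AP0 (Icc 0 fmax))
    (hAP0nonneg : ∀ f ∈ Icc (0:ℝ) fmax, 0 ≤ AP0 f)
    (hAP0anti : AntitoneOn AP0 (Icc 0 fmax)) :
    ∀ f : ℝ, 0 < f → f ≤ fmax → ∃! L : ℝ, 0 < L ∧ f * H0 f L = AP0 f + r := by
  intro f hf0 hffmax
  have hf : f ∈ Icc (0:ℝ) fmax := ⟨le_of_lt hf0, hffmax⟩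
  set c : ℝ := AP0 f + r with hc_def
  have hc : 0 < c := add_pos_of_nonneg_of_pos (hAP0nonneg f hf) hr
  have hcf : 0 < c / f := div_pos hc hf0
  -- continuity of the slice
  have hcont : ContinuousOn (fun L => H0 f L) (Ioi 0) := by
    have hslice : ContinuousOn (fun L : ℝ => ((f, L) : ℝ × ℝ)) (Ioi 0) :=
      (continuous_const.prodMk continuous_id).continuousOn
    exact hH0cont.comp hslice (fun L hL => ⟨hf, hL⟩)
  -- find L1 with H0 f L1 ≥ c / f
  have hev1 : ∀ᶠ L in nhdsWithin (0:ℝ) (Ioi 0), c / f ≤ H0 f L :=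
    (hH0zero f hf).eventually (eventually_ge_atTop (c / f))
  obtain ⟨L1, hL1ge, hL1pos⟩ := (hev1.and self_mem_nhdsWithin).exists
  -- find L2 ≥ max L1 1 with H0 f L2 < c / f
  have hev2 : ∀ᶠ L in atTop, H0 f L < c / f :=
    (hH0top f hf).eventually (gt_mem_nhds hcf)
  obtain ⟨L2, hL2lt, hL2ge⟩ := (hev2.and (eventually_ge_atTop (max L1 1))).exists
  have hL12 : L1 ≤ L2 := le_trans (le_max_left _ _) hL2ge
  have hL2pos : (0:ℝ) < L2 := lt_of_lt_of_le one_pos (le_trans (le_max_right _ _) hL2ge)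
  -- IVT on [L1, L2]
  have hsub : Icc L1 L2 ⊆ Ioi (0:ℝ) := fun x hx => lt_of_lt_of_le hL1pos hx.1
  have hivt := intermediate_value_Icc' hL12 (hcont.mono hsub)
  have hcmem : c / f ∈ Icc (H0 f L2) (H0 f L1) := ⟨le_of_lt hL2lt, hL1ge⟩
  obtain ⟨L, hLmem, hLeq⟩ := hivt hcmem
  have hLpos : 0 < L := hsub hLmem
  have hLeq' : H0 f L = c / f := hLeq
  refine ⟨L, ⟨hLpos, ?_⟩, ?_⟩
  · rw [hLeq']; field_simp
  · rintro L' ⟨hL'pos, hL'eq⟩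
    have hH0eq : H0 f L' = H0 f L := by
      have h1 : H0 f L' = c / f := by
        field_simp at hL'eq ⊢; linarith [hL'eq]
      rw [h1, hLeq']
    exact (hH0L f hf).injOn hL'pos hLpos hH0eq
end

section
/- There exists an am-AMM competitive equilibrium: there is an L* > 0 with max_{f ∈ [0, f_max]} (f·H0(f, L*) − AE0(f)) = r, and setting R* = (AP0(0) + r)·V(L*), the pair (R*, L*) satisfies both zero-profit conditions Π_MGR(R*, L*) = 0 and Π_LP(R*, L*) = 0. -/
/-!
Let `M(L) = max_{f ∈ [0, fmax]} (f·H0(f, L) − AE0(f))`. As a maximum over a compact interval of a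
jointly continuous function, `M` is continuous on `(0, ∞)`. Evaluating at `f = fmax` shows
`M(L) → ∞` as `L → 0+`, while monotonicity of `H0` in `f` bounds `M(L)` by `fmax·H0(0, L) → 0`
as `L → ∞`. The intermediate value theorem gives `L* > 0` with `M(L*) = r`; the manager's
maximum is `M(L*) + AP0(0)`, so both zero-profit conditions hold with `R* = (AP0(0) + r)·V(L*)`.
-/

open Set Filter Topology

theorem AntitoneOn.le_of_tendsto_atTop {α β : Type*} [LinearOrder α] [NoMaxOrder α]
    [TopologicalSpace β] [Preorder β] [ClosedIicTopology β] {g : α → β} {a x : α} {c : β}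
    (hg : AntitoneOn g (Ioi a)) (hlim : Tendsto g atTop (𝓝 c)) (hx : a < x) : c ≤ g x :=
  have : Nonempty α := ⟨x⟩
  le_of_tendsto hlim <| by
    filter_upwards [eventually_gt_atTop x] with y hy using hg hx (hx.trans hy) hy.le

theorem IsCompact.continuousOn_sSup {α β γ : Type*} [ConditionallyCompleteLinearOrder α]
    [TopologicalSpace α] [OrderTopology α] [TopologicalSpace β] [TopologicalSpace γ]
    {f : γ → β → α} {s : Set γ} {K : Set β} (hK : IsCompact K)
    (hf : ContinuousOn ↿f (s ×ˢ K)) : ContinuousOn (fun x => sSup (f x '' K)) s := by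
  have : CompactSpace K := isCompact_iff_compactSpace.mp hK
  rw [continuousOn_iff_continuous_domRestrict]
  have hcont : Continuous fun p : s × K => f p.1 p.2 :=
    hf.comp_continuous (f := fun p : s × K => ((p.1 : γ), (p.2 : β))) (by fun_prop)
      fun p => ⟨p.1.2, p.2.2⟩
  convert isCompact_univ.continuous_sSup (f := fun (x : s) (y : K) => f x y) hcont using 3 with x
  rw [image_univ, ← image_eq_range]
  rfl

theorem sSup_image_add_const {α β : Type*} [ConditionallyCompleteLattice β] [AddGroup β]
    [AddRightMono β] {f : α → β} {s : Set α} (hs : s.Nonempty) (hf : BddAbove (f '' s)) (c : β) :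
    sSup ((fun x => f x + c) '' s) = sSup (f '' s) + c := by
  rw [← OrderIso.addRight_apply, (OrderIso.addRight c).map_csSup' (hs.image f) hf, image_image]
  rfl

noncomputable def maxNetRevenueRate (H0 : ℝ → ℝ → ℝ) (AE0 : ℝ → ℝ) (fmax L : ℝ) : ℝ :=
  sSup ((fun f => f * H0 f L - AE0 f) '' Icc 0 fmax)

section NetRevenue

variable {fmax L : ℝ} {H0 : ℝ → ℝ → ℝ} {AE0 : ℝ → ℝ}

theorem continuousOn_netRevenue
    (hH0cont : ContinuousOn (fun p : ℝ × ℝ => H0 p.1 p.2) (Icc 0 fmax ×ˢ Ioi 0))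
    (hAE0cont : ContinuousOn AE0 (Icc 0 fmax)) :
    ContinuousOn (fun p : ℝ × ℝ => p.2 * H0 p.2 p.1 - AE0 p.2) (Ioi 0 ×ˢ Icc 0 fmax) := by
  have hswap : MapsTo Prod.swap (Ioi (0 : ℝ) ×ˢ Icc 0 fmax) (Icc (0 : ℝ) fmax ×ˢ Ioi 0) :=
    fun _ hp => ⟨hp.2, hp.1⟩
  exact (continuousOn_snd.mul (hH0cont.comp continuous_swap.continuousOn hswap)).sub
    (hAE0cont.comp continuousOn_snd fun _ hp => hp.2)

theorem continuousOn_maxNetRevenueRate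
    (hH0cont : ContinuousOn (fun p : ℝ × ℝ => H0 p.1 p.2) (Icc 0 fmax ×ˢ Ioi 0))
    (hAE0cont : ContinuousOn AE0 (Icc 0 fmax)) :
    ContinuousOn (maxNetRevenueRate H0 AE0 fmax) (Ioi 0) :=
  isCompact_Icc.continuousOn_sSup (continuousOn_netRevenue hH0cont hAE0cont)

theorem bddAbove_netRevenue
    (hH0cont : ContinuousOn (fun p : ℝ × ℝ => H0 p.1 p.2) (Icc 0 fmax ×ˢ Ioi 0))
    (hAE0cont : ContinuousOn AE0 (Icc 0 fmax)) (hL : 0 < L) :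
    BddAbove ((fun f => f * H0 f L - AE0 f) '' Icc 0 fmax) :=
  (isCompact_Icc.image_of_continuousOn <| (continuousOn_netRevenue hH0cont hAE0cont).comp
    (continuousOn_const.prodMk continuousOn_id) fun _ hf => ⟨hL, hf⟩).bddAbove

theorem le_maxNetRevenueRate
    (hH0cont : ContinuousOn (fun p : ℝ × ℝ => H0 p.1 p.2) (Icc 0 fmax ×ˢ Ioi 0))
    (hAE0cont : ContinuousOn AE0 (Icc 0 fmax)) (hL : 0 < L) {f : ℝ} (hf : f ∈ Icc 0 fmax) :
    f * H0 f L - AE0 f ≤ maxNetRevenueRate H0 AE0 fmax L :=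
  le_csSup (bddAbove_netRevenue hH0cont hAE0cont hL) (mem_image_of_mem _ hf)

theorem maxNetRevenueRate_add (hfmax : 0 ≤ fmax)
    (hH0cont : ContinuousOn (fun p : ℝ × ℝ => H0 p.1 p.2) (Icc 0 fmax ×ˢ Ioi 0))
    (hAE0cont : ContinuousOn AE0 (Icc 0 fmax)) (hL : 0 < L) (c : ℝ) :
    maxNetRevenueRate H0 AE0 fmax L + c =
      sSup ((fun f => f * H0 f L + c - AE0 f) '' Icc 0 fmax) := by
  rw [maxNetRevenueRate, ← sSup_image_add_const (nonempty_Icc.2 hfmax)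
    (bddAbove_netRevenue hH0cont hAE0cont hL)]
  exact congrArg sSup (image_congr fun f _ => by ring)

theorem tendsto_maxNetRevenueRate_nhdsGT_zero (hfmax : 0 < fmax)
    (hH0cont : ContinuousOn (fun p : ℝ × ℝ => H0 p.1 p.2) (Icc 0 fmax ×ˢ Ioi 0))
    (hAE0cont : ContinuousOn AE0 (Icc 0 fmax))
    (hH0zero : Tendsto (fun L => H0 fmax L) (𝓝[>] 0) atTop) :
    Tendsto (maxNetRevenueRate H0 AE0 fmax) (𝓝[>] 0) atTop := by
  have hfmax_mem : fmax ∈ Icc 0 fmax := ⟨hfmax.le, le_rfl⟩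
  refine tendsto_atTop_mono' _ ?_
    (tendsto_atTop_add_const_right _ (-AE0 fmax) (hH0zero.const_mul_atTop hfmax))
  filter_upwards [self_mem_nhdsWithin] with L hL
  exact le_maxNetRevenueRate hH0cont hAE0cont hL hfmax_mem

theorem maxNetRevenueRate_le (hfmax : 0 ≤ fmax)
    (hH0f : AntitoneOn (fun f => H0 f L) (Icc 0 fmax))
    (hH0nonneg : ∀ f ∈ Icc (0:ℝ) fmax, 0 ≤ H0 f L)
    (hAE0nonneg : ∀ f ∈ Icc (0:ℝ) fmax, 0 ≤ AE0 f) :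
    maxNetRevenueRate H0 AE0 fmax L ≤ fmax * H0 0 L := by
  refine csSup_le ((nonempty_Icc.2 hfmax).image _) ?_
  rintro _ ⟨f, hf, rfl⟩
  have h0 : (0 : ℝ) ∈ Icc 0 fmax := ⟨le_rfl, hfmax⟩
  have : f * H0 f L ≤ fmax * H0 0 L :=
    mul_le_mul hf.2 (hH0f h0 hf hf.1) (hH0nonneg f hf) hfmax
  linarith [hAE0nonneg f hf]

theorem eventually_maxNetRevenueRate_lt {r : ℝ} (hfmax : 0 ≤ fmax) (hr : 0 < r)
    (hH0f : ∀ L : ℝ, 0 < L → AntitoneOn (fun f => H0 f L) (Icc 0 fmax))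
    (hH0L : ∀ f ∈ Icc (0:ℝ) fmax, StrictAntiOn (fun L => H0 f L) (Ioi 0))
    (hH0top : ∀ f ∈ Icc (0:ℝ) fmax, Tendsto (fun L => H0 f L) atTop (𝓝 0))
    (hAE0nonneg : ∀ f ∈ Icc (0:ℝ) fmax, 0 ≤ AE0 f) :
    ∀ᶠ L in atTop, maxNetRevenueRate H0 AE0 fmax L < r := by
  have hbound : Tendsto (fun L => fmax * H0 0 L) atTop (𝓝 0) := by
    simpa using (hH0top 0 ⟨le_rfl, hfmax⟩).const_mul fmax
  filter_upwards [hbound.eventually (eventually_lt_nhds hr), eventually_gt_atTop 0]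
    with L hLr hL
  have hH0nonneg : ∀ f ∈ Icc (0:ℝ) fmax, 0 ≤ H0 f L := fun f hf =>
    (hH0L f hf).antitoneOn.le_of_tendsto_atTop (hH0top f hf) hL
  exact (maxNetRevenueRate_le hfmax (hH0f L hL) hH0nonneg hAE0nonneg).trans_lt hLr

end NetRevenue

theorem amAMM_equilibrium_exists_general
    (fmax r P : ℝ) (hfmax : 0 < fmax) (hr : 0 < r)
    (H0 : ℝ → ℝ → ℝ)
    (hH0cont : ContinuousOn (fun p : ℝ × ℝ => H0 p.1 p.2) (Icc 0 fmax ×ˢ Ioi 0))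
    (hH0f : ∀ L : ℝ, 0 < L → AntitoneOn (fun f => H0 f L) (Icc 0 fmax))
    (hH0L : ∀ f ∈ Icc (0:ℝ) fmax, StrictAntiOn (fun L => H0 f L) (Ioi 0))
    (hH0top : ∀ f ∈ Icc (0:ℝ) fmax, Tendsto (fun L => H0 f L) atTop (nhds 0))
    (hH0zero : ∀ f ∈ Icc (0:ℝ) fmax,
      Tendsto (fun L => H0 f L) (nhdsWithin 0 (Ioi 0)) atTop)
    (AP0 : ℝ → ℝ)
    (AE0 : ℝ → ℝ)
    (hAE0cont : ContinuousOn AE0 (Icc 0 fmax))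
    (hAE0nonneg : ∀ f ∈ Icc (0:ℝ) fmax, 0 ≤ AE0 f) :
    ∃ Lstar : ℝ, 0 < Lstar ∧
      sSup ((fun f => f * H0 f Lstar - AE0 f) '' Icc 0 fmax) = r ∧
      (sSup ((fun f => f * H0 f Lstar + AP0 0 - AE0 f) '' Icc 0 fmax))
          * (2 * Real.sqrt P * Lstar) - (AP0 0 + r) * (2 * Real.sqrt P * Lstar) = 0 ∧
      (AP0 0 + r) * (2 * Real.sqrt P * Lstar)
          - (AP0 0 + r) * (2 * Real.sqrt P * Lstar) = 0 := by
  obtain ⟨L₁, hL₁r, hL₁⟩ := (((tendsto_maxNetRevenueRate_nhdsGT_zero hfmax hH0cont hAE0cont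
    (hH0zero fmax ⟨hfmax.le, le_rfl⟩)).eventually_ge_atTop r).and self_mem_nhdsWithin).exists
  obtain ⟨L₂, hL₂r, hL₂⟩ := ((eventually_maxNetRevenueRate_lt hfmax.le hr hH0f hH0L hH0top
    hAE0nonneg).and (eventually_gt_atTop 0)).exists
  obtain ⟨L, hL, hLr⟩ := isPreconnected_Ioi.intermediate_value hL₂ hL₁
    (continuousOn_maxNetRevenueRate hH0cont hAE0cont) ⟨hL₂r.le, hL₁r⟩
  refine ⟨L, hL, hLr, ?_, sub_self _⟩
  rw [← maxNetRevenueRate_add hfmax.le hH0cont hAE0cont hL, hLr, add_comm, sub_self]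

/-- **Existence of an am-AMM competitive equilibrium (part of Theorem 1).** There exists a
liquidity level `L* > 0` with `max_{f ∈ [0,fmax]} (f·H0(f,L*) − AE0(f)) = r`, and with rent
`R* = (AP0(0) + r)·V(L*)` the pair `(R*, L*)` satisfies both zero-profit conditions
`Π_MGR(R*,L*) = 0` and `Π_LP(R*,L*) = 0`, where `V(L) = 2·√P·L`,
`Π_MGR(R,L) = (max_{f ∈ [0,fmax]} (f·H0(f,L) + AP0(0) − AE0(f)))·V(L) − R` and
`Π_LP(R,L) = R − (AP0(0) + r)·V(L)`. -/
theorem amAMM_equilibrium_exists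
    (fmax r P : ℝ) (hfmax : 0 < fmax) (hr : 0 < r) (hP : 0 < P)
    (H0 : ℝ → ℝ → ℝ)
    (hH0cont : ContinuousOn (fun p : ℝ × ℝ => H0 p.1 p.2) (Icc 0 fmax ×ˢ Ioi 0))
    (hH0f : ∀ L : ℝ, 0 < L → AntitoneOn (fun f => H0 f L) (Icc 0 fmax))
    (hH0L : ∀ f ∈ Icc (0:ℝ) fmax, StrictAntiOn (fun L => H0 f L) (Ioi 0))
    (hH0top : ∀ f ∈ Icc (0:ℝ) fmax, Tendsto (fun L => H0 f L) atTop (nhds 0))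
    (hH0zero : ∀ f ∈ Icc (0:ℝ) fmax,
      Tendsto (fun L => H0 f L) (nhdsWithin 0 (Ioi 0)) atTop)
    (AP0 : ℝ → ℝ)
    (hAP0cont : ContinuousOn AP0 (Icc 0 fmax))
    (hAP0nonneg : ∀ f ∈ Icc (0:ℝ) fmax, 0 ≤ AP0 f)
    (hAP0anti : AntitoneOn AP0 (Icc 0 fmax))
    (AE0 : ℝ → ℝ)
    (hAE0cont : ContinuousOn AE0 (Icc 0 fmax))
    (hAE0nonneg : ∀ f ∈ Icc (0:ℝ) fmax, 0 ≤ AE0 f)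
    (hAE0anti : AntitoneOn AE0 (Icc 0 fmax))
    (hAE0le : ∀ f ∈ Icc (0:ℝ) fmax, AE0 f ≤ AP0 f)
    (hAE0lt : ∀ f ∈ Icc (0:ℝ) fmax, 0 < f → AE0 f < AP0 f) :
    ∃ Lstar : ℝ, 0 < Lstar ∧
      sSup ((fun f => f * H0 f Lstar - AE0 f) '' Icc 0 fmax) = r ∧
      (sSup ((fun f => f * H0 f Lstar + AP0 0 - AE0 f) '' Icc 0 fmax))
          * (2 * Real.sqrt P * Lstar) - (AP0 0 + r) * (2 * Real.sqrt P * Lstar) = 0 ∧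
      (AP0 0 + r) * (2 * Real.sqrt P * Lstar)
          - (AP0 0 + r) * (2 * Real.sqrt P * Lstar) = 0 :=
  amAMM_equilibrium_exists_general fmax r P hfmax hr H0 hH0cont hH0f hH0L hH0top hH0zero AP0 AE0
    hAE0cont hAE0nonneg
end

section
/- Liquidity dominance of the am-AMM: if L* > 0 satisfies the am-AMM equilibrium condition max_{f ∈ [0, f_max]} (f·H0(f, L*) − AE0(f)) = r, then for every fee f with 0 < f ≤ f_max and every fixed-fee equilibrium liquidity L_ff(f) (i.e., every L > 0 with f·H0(f, L) = AP0(f) + r), one has L* > L_ff(f). In particular, in equilibrium the am-AMM has strictly higher liquidity than any fixed-fee AMM with positive fee at most f_max. -/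
open Set Filter

/-- **Liquidity dominance of the am-AMM (Theorem 1).** If `L* > 0` satisfies the am-AMM
equilibrium condition `max_{f ∈ [0,fmax]} (f·H0(f,L*) − AE0(f)) = r`, then for every fee
`0 < f ≤ fmax` and every fixed-fee equilibrium liquidity `L_ff > 0` (i.e. with
`f·H0(f,L_ff) = AP0(f) + r`), one has `L_ff < L*`. -/
theorem amAMM_liquidity_dominance
    (fmax r : ℝ) (hfmax : 0 < fmax) (hr : 0 < r)
    (H0 : ℝ → ℝ → ℝ)
    (hH0cont : ContinuousOn (fun p : ℝ × ℝ => H0 p.1 p.2) (Icc 0 fmax ×ˢ Ioi 0))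
    (hH0f : ∀ L : ℝ, 0 < L → AntitoneOn (fun f => H0 f L) (Icc 0 fmax))
    (hH0L : ∀ f ∈ Icc (0:ℝ) fmax, StrictAntiOn (fun L => H0 f L) (Ioi 0))
    (hH0top : ∀ f ∈ Icc (0:ℝ) fmax, Tendsto (fun L => H0 f L) atTop (nhds 0))
    (hH0zero : ∀ f ∈ Icc (0:ℝ) fmax,
      Tendsto (fun L => H0 f L) (nhdsWithin 0 (Ioi 0)) atTop)
    (AP0 : ℝ → ℝ)
    (hAP0cont : ContinuousOn AP0 (Icc 0 fmax))
    (hAP0nonneg : ∀ f ∈ Icc (0:ℝ) fmax, 0 ≤ AP0 f)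
    (hAP0anti : AntitoneOn AP0 (Icc 0 fmax))
    (AE0 : ℝ → ℝ)
    (hAE0cont : ContinuousOn AE0 (Icc 0 fmax))
    (hAE0nonneg : ∀ f ∈ Icc (0:ℝ) fmax, 0 ≤ AE0 f)
    (hAE0anti : AntitoneOn AE0 (Icc 0 fmax))
    (hAE0le : ∀ f ∈ Icc (0:ℝ) fmax, AE0 f ≤ AP0 f)
    (hAE0lt : ∀ f ∈ Icc (0:ℝ) fmax, 0 < f → AE0 f < AP0 f)
    (Lstar : ℝ) (hLstar : 0 < Lstar)
    (heq : sSup ((fun f => f * H0 f Lstar - AE0 f) '' Icc 0 fmax) = r) :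
    ∀ f : ℝ, 0 < f → f ≤ fmax →
      ∀ Lff : ℝ, 0 < Lff → f * H0 f Lff = AP0 f + r → Lff < Lstar := by
  intro f hf hffmax Lff hLff hzero
  have hfmem : f ∈ Icc (0:ℝ) fmax := ⟨le_of_lt hf, hffmax⟩
  -- continuity of the objective on the compact interval gives bddAbove
  have hcont : ContinuousOn (fun g => g * H0 g Lstar - AE0 g) (Icc 0 fmax) := by
    apply ContinuousOn.sub _ hAE0cont
    apply ContinuousOn.mul continuousOn_id
    have : ContinuousOn (fun g : ℝ => (g, Lstar)) (Icc 0 fmax) :=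
      (continuous_id.prodMk continuous_const).continuousOn
    exact hH0cont.comp this (fun g hg => ⟨hg, hLstar⟩)
  have hbdd : BddAbove ((fun g => g * H0 g Lstar - AE0 g) '' Icc 0 fmax) :=
    (isCompact_Icc.image_of_continuousOn hcont).bddAbove
  have hle : f * H0 f Lstar - AE0 f ≤ r := by
    rw [← heq]
    exact le_csSup hbdd ⟨f, hfmem, rfl⟩
  have h1 : f * H0 f Lstar < f * H0 f Lff := by
    have := hAE0lt f hfmem hf
    calc f * H0 f Lstar ≤ r + AE0 f := by linarith
    _ < AP0 f + r := by linarith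
    _ = f * H0 f Lff := hzero.symm
  have h2 : H0 f Lstar < H0 f Lff := lt_of_mul_lt_mul_left h1 (le_of_lt hf)
  by_contra hcon
  push_neg at hcon
  rcases eq_or_lt_of_le hcon with h | h
  · rw [h] at h2; exact lt_irrefl _ h2
  · exact absurd (hH0L f hfmem hLstar hLff h) (not_lt.mpr (le_of_lt h2))
end

section
/- Manager profit is strictly positive at any fixed-fee equilibrium: let f satisfy 0 < f ≤ f_max, let L > 0 satisfy the fixed-fee zero-profit condition f·H0(f, L) = AP0(f) + r, and set R = (AP0(0) + r)·V(L). Then Π_MGR(R, L) ≥ (AP0(f) − AE0(f))·V(L) > 0. -/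
open Set

theorem IsCompact.le_csSup_image_of_continuousOn {α β : Type*} [ConditionallyCompleteLinearOrder α]
    [TopologicalSpace α] [ClosedIciTopology α] [TopologicalSpace β] {φ : β → α} {K : Set β}
    (hK : IsCompact K) (hφ : ContinuousOn φ K) {x : β} (hx : x ∈ K) :
    φ x ≤ sSup (φ '' K) :=
  le_csSup (hK.bddAbove_image hφ) (mem_image_of_mem φ hx)

theorem manager_profit_pos_at_ff_equilibrium_general
    (fmax r P : ℝ) (hP : 0 < P)
    (H0 : ℝ → ℝ → ℝ)
    (hH0cont : ContinuousOn (fun p : ℝ × ℝ => H0 p.1 p.2) (Icc 0 fmax ×ˢ Ioi 0))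
    (AP0 : ℝ → ℝ)
    (AE0 : ℝ → ℝ)
    (hAE0cont : ContinuousOn AE0 (Icc 0 fmax))
    (hAE0lt : ∀ f ∈ Icc (0:ℝ) fmax, 0 < f → AE0 f < AP0 f)
    (f L : ℝ) (hf : 0 < f) (hffmax : f ≤ fmax) (hL : 0 < L)
    (heq : f * H0 f L = AP0 f + r) :
    (AP0 f - AE0 f) * (2 * Real.sqrt P * L) ≤
      (sSup ((fun g => g * H0 g L + AP0 0 - AE0 g) '' Icc 0 fmax))
        * (2 * Real.sqrt P * L) - (AP0 0 + r) * (2 * Real.sqrt P * L) ∧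
    0 < (AP0 f - AE0 f) * (2 * Real.sqrt P * L) := by
  have hV : 0 < 2 * Real.sqrt P * L := by positivity
  have hf_mem : f ∈ Icc 0 fmax := ⟨hf.le, hffmax⟩
  have h_cont : ContinuousOn (fun g => g * H0 g L + AP0 0 - AE0 g) (Icc 0 fmax) :=
    ((continuousOn_id.mul (hH0cont.uncurry_right L hL)).add continuousOn_const).sub hAE0cont
  have h_le := isCompact_Icc.le_csSup_image_of_continuousOn h_cont hf_mem
  refine ⟨?_, mul_pos (sub_pos.2 (hAE0lt f hf_mem hf)) hV⟩
  rw [← sub_mul]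
  -- By the zero-profit condition the objective at `f` is `(AP0 f - AE0 f) + (AP0 0 + r)`.
  exact mul_le_mul_of_nonneg_right (by linarith) hV.le

/-- **Manager profit is strictly positive at a fixed-fee equilibrium (proof of Theorem 1).**
Let `0 < f ≤ fmax`, let `L > 0` satisfy the fixed-fee zero-profit condition
`f·H0(f,L) = AP0(f) + r`, and set `R = (AP0(0) + r)·V(L)` with `V(L) = 2·√P·L`. Then
`Π_MGR(R,L) ≥ (AP0(f) − AE0(f))·V(L) > 0`, where
`Π_MGR(R,L) = (max_{g ∈ [0,fmax]} (g·H0(g,L) + AP0(0) − AE0(g)))·V(L) − R`. -/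
theorem manager_profit_pos_at_ff_equilibrium
    (fmax r P : ℝ) (hfmax : 0 < fmax) (hr : 0 < r) (hP : 0 < P)
    (H0 : ℝ → ℝ → ℝ)
    (hH0cont : ContinuousOn (fun p : ℝ × ℝ => H0 p.1 p.2) (Icc 0 fmax ×ˢ Ioi 0))
    (hH0f : ∀ L : ℝ, 0 < L → AntitoneOn (fun f => H0 f L) (Icc 0 fmax))
    (AP0 : ℝ → ℝ)
    (hAP0cont : ContinuousOn AP0 (Icc 0 fmax))
    (hAP0nonneg : ∀ f ∈ Icc (0:ℝ) fmax, 0 ≤ AP0 f)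
    (hAP0anti : AntitoneOn AP0 (Icc 0 fmax))
    (AE0 : ℝ → ℝ)
    (hAE0cont : ContinuousOn AE0 (Icc 0 fmax))
    (hAE0nonneg : ∀ f ∈ Icc (0:ℝ) fmax, 0 ≤ AE0 f)
    (hAE0anti : AntitoneOn AE0 (Icc 0 fmax))
    (hAE0le : ∀ f ∈ Icc (0:ℝ) fmax, AE0 f ≤ AP0 f)
    (hAE0lt : ∀ f ∈ Icc (0:ℝ) fmax, 0 < f → AE0 f < AP0 f)
    (f L : ℝ) (hf : 0 < f) (hffmax : f ≤ fmax) (hL : 0 < L)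
    (heq : f * H0 f L = AP0 f + r) :
    (AP0 f - AE0 f) * (2 * Real.sqrt P * L) ≤
      (sSup ((fun g => g * H0 g L + AP0 0 - AE0 g) '' Icc 0 fmax))
        * (2 * Real.sqrt P * L) - (AP0 0 + r) * (2 * Real.sqrt P * L) ∧
    0 < (AP0 f - AE0 f) * (2 * Real.sqrt P * L) :=
  manager_profit_pos_at_ff_equilibrium_general fmax r P hP H0 hH0cont AP0 AE0 hAE0cont hAE0lt f L hf
    hffmax hL heq
end

section
/- The am-AMM equilibrium fee is at least the revenue-optimal fee: fix L > 0 and suppose g(f) := f·H0(f, L) is concave on [0, f_max] and AE0 is convex on [0, f_max]. Let f* be the greatest maximizer of g(f) − AE0(f) over [0, f_max] (which exists by continuity and compactness). Then every maximizer f_opt of g over [0, f_max] satisfies f_opt ≤ f*. -/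
open Set Filter

/-- **The am-AMM equilibrium fee is at least the revenue-optimal fee.** Fix `L > 0`, suppose
`g(f) = f·H0(f,L)` is concave on `[0,fmax]` and `AE0` is convex on `[0,fmax]`. If `f*` is the
greatest maximizer of `g(f) − AE0(f)` over `[0,fmax]`, then every maximizer `f_opt` of `g` over
`[0,fmax]` satisfies `f_opt ≤ f*`. -/
theorem fee_opt_le_amAMM_fee
    (fmax : ℝ) (hfmax : 0 < fmax)
    (H0 : ℝ → ℝ → ℝ)
    (hH0cont : ContinuousOn (fun p : ℝ × ℝ => H0 p.1 p.2) (Icc 0 fmax ×ˢ Ioi 0))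
    (hH0f : ∀ L : ℝ, 0 < L → AntitoneOn (fun f => H0 f L) (Icc 0 fmax))
    (AE0 : ℝ → ℝ)
    (hAE0cont : ContinuousOn AE0 (Icc 0 fmax))
    (hAE0nonneg : ∀ f ∈ Icc (0:ℝ) fmax, 0 ≤ AE0 f)
    (hAE0anti : AntitoneOn AE0 (Icc 0 fmax))
    (L : ℝ) (hL : 0 < L)
    (hconc : ConcaveOn ℝ (Icc 0 fmax) (fun f => f * H0 f L))
    (hconv : ConvexOn ℝ (Icc 0 fmax) AE0)
    (fstar : ℝ)
    (hfstar : IsGreatest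
      {f | f ∈ Icc (0:ℝ) fmax ∧
        ∀ g ∈ Icc (0:ℝ) fmax, g * H0 g L - AE0 g ≤ f * H0 f L - AE0 f} fstar) :
    ∀ fopt ∈ Icc (0:ℝ) fmax,
      (∀ g ∈ Icc (0:ℝ) fmax, g * H0 g L ≤ fopt * H0 fopt L) → fopt ≤ fstar := by
  intro fopt hfopt hmax
  by_contra h
  push_neg at h
  have hAE : AE0 fopt ≤ AE0 fstar := hAE0anti hfstar.1.1 hfopt h.le
  have hmem : fopt ∈ {f | f ∈ Icc (0:ℝ) fmax ∧
      ∀ g ∈ Icc (0:ℝ) fmax, g * H0 g L - AE0 g ≤ f * H0 f L - AE0 f} := by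
    refine ⟨hfopt, fun g hg => ?_⟩
    have h1 := hfstar.1.2 g hg
    have h2 : fstar * H0 fstar L ≤ fopt * H0 fopt L := hmax fstar hfstar.1.1
    linarith
  exact absurd (hfstar.2 hmem) (not_le.mpr h)
end
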